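/- arXiv:1301.4763 — 5 statements merged into one kernel-verified Lean document; each statement's English description precedes it below -/
import Mathlib

section
/- Let Σ be a finite set with at least two elements, μ a probability vector, ℓ : Σ → ℝ≥0, R ∈ [0,2]. Assume there exist distinct x⁰ achieving max_i ℓ_i and x₀ achieving min_i ℓ_i with μ(x⁰) + R/2 ≤ 1 and μ(x₀) ≥ R/2. Then sup{∑_i ℓ_i ν_i : ν probability vector, ∑_i |ν_i−μ_i| ≤ R} = ∑_i ℓ_i μ_i + (R/2)(max_i ℓ_i − min_i ℓ_i). -/
/-!
Write `ν = μ + d`, so `∑ d = 0`. Then `∑ ℓ d = ∑ (ℓ - c) d` for the midpoint `c` of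
`[min ℓ, max ℓ]`, and `|ℓ - c| ≤ (max ℓ - min ℓ) / 2` gives
`∑ ℓ d ≤ (max ℓ - min ℓ) / 2 · ∑ |d| ≤ (R / 2) (max ℓ - min ℓ)`.
Moving mass `R / 2` from a minimiser of `ℓ` to a maximiser attains this bound.
-/

open Finset

theorem sum_mul_sub_le_of_mem_Icc {ι : Type*} (s : Finset ι) {ℓ d : ι → ℝ} {m M : ℝ}
    (hℓ : ∀ i ∈ s, ℓ i ∈ Set.Icc m M) (hd : ∑ i ∈ s, d i = 0) :
    ∑ i ∈ s, ℓ i * d i ≤ (M - m) / 2 * ∑ i ∈ s, |d i| := by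
  have hcentre : ∑ i ∈ s, ℓ i * d i = ∑ i ∈ s, (ℓ i - (M + m) / 2) * d i := by
    simp only [sub_mul, sum_sub_distrib, ← mul_sum, hd, mul_zero, sub_zero]
  rw [hcentre, mul_sum]
  refine sum_le_sum fun i hi => ?_
  have hdev : |ℓ i - (M + m) / 2| ≤ (M - m) / 2 := by
    obtain ⟨hmi, hiM⟩ := hℓ i hi
    rw [abs_le]; constructor <;> linarith
  calc (ℓ i - (M + m) / 2) * d i ≤ |ℓ i - (M + m) / 2| * |d i| := by
        rw [← abs_mul]; exact le_abs_self _
    _ ≤ (M - m) / 2 * |d i| := by gcongr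

theorem sum_mul_le_of_sum_abs_sub_le {ι : Type*} (s : Finset ι) {ℓ μ ν : ι → ℝ} {m M R : ℝ}
    (hℓ : ∀ i ∈ s, ℓ i ∈ Set.Icc m M) (hmM : m ≤ M) (hsum : ∑ i ∈ s, ν i = ∑ i ∈ s, μ i)
    (hTV : ∑ i ∈ s, |ν i - μ i| ≤ R) :
    ∑ i ∈ s, ℓ i * ν i ≤ ∑ i ∈ s, ℓ i * μ i + R / 2 * (M - m) := by
  have hd : ∑ i ∈ s, (ν i - μ i) = 0 := by rw [sum_sub_distrib, hsum, sub_self]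
  calc ∑ i ∈ s, ℓ i * ν i = ∑ i ∈ s, ℓ i * μ i + ∑ i ∈ s, ℓ i * (ν i - μ i) := by
        rw [← sum_add_distrib]; simp only [mul_sub, add_sub_cancel]
    _ ≤ ∑ i ∈ s, ℓ i * μ i + (M - m) / 2 * ∑ i ∈ s, |ν i - μ i| := by
        gcongr; exact sum_mul_sub_le_of_mem_Icc s hℓ hd
    _ ≤ ∑ i ∈ s, ℓ i * μ i + R / 2 * (M - m) := by
        have hspread : 0 ≤ (M - m) / 2 := by linarith
        linarith [mul_le_mul_of_nonneg_left hTV hspread]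

section TransferMass

variable {ι : Type*} [DecidableEq ι]

-- Moves mass `c` from `b` to `a`.
def transferMass (μ : ι → ℝ) (b a : ι) (c : ℝ) : ι → ℝ :=
  μ + Pi.single a c - Pi.single b c

theorem transferMass_nonneg {μ : ι → ℝ} (hμ : ∀ i, 0 ≤ μ i) {a b : ι} {c : ℝ}
    (hc : 0 ≤ c) (hcb : c ≤ μ b) (i : ι) : 0 ≤ transferMass μ b a c i := by
  have hgain : 0 ≤ (Pi.single a c : ι → ℝ) i := by
    rw [Pi.single_apply]; split_ifs
    exacts [hc, le_rfl]
  have hloss : (Pi.single b c : ι → ℝ) i ≤ μ i := by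
    rw [Pi.single_apply]; split_ifs with hib
    exacts [hib ▸ hcb, hμ i]
  simp only [transferMass, Pi.add_apply, Pi.sub_apply]
  linarith

variable [Fintype ι]

theorem sum_mul_transferMass (ℓ μ : ι → ℝ) (b a : ι) (c : ℝ) :
    ∑ i, ℓ i * transferMass μ b a c i = ∑ i, ℓ i * μ i + c * (ℓ a - ℓ b) := by
  simp only [transferMass, Pi.add_apply, Pi.sub_apply, mul_add, mul_sub, sum_add_distrib,
    sum_sub_distrib, Pi.single_apply, mul_ite, mul_zero, sum_ite_eq', mem_univ, if_true]
  ring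

theorem sum_transferMass (μ : ι → ℝ) (b a : ι) (c : ℝ) :
    ∑ i, transferMass μ b a c i = ∑ i, μ i := by
  simpa using sum_mul_transferMass 1 μ b a c

theorem sum_abs_transferMass_sub {a b : ι} (hab : a ≠ b) (μ : ι → ℝ) (c : ℝ) :
    ∑ i, |transferMass μ b a c i - μ i| = 2 * |c| := by
  rw [Fintype.sum_eq_add a b hab]
  · simp [transferMass, hab, hab.symm, two_mul]
  · intro i ⟨hia, hib⟩
    simp [transferMass, hia, hib]

end TransferMass

theorem stmt_6_general {S : Type*} [Fintype S]
    (μ : S → ℝ) (hμ0 : ∀ i, 0 ≤ μ i) (hμ1 : ∑ i, μ i = 1)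
    (ℓ : S → ℝ)
    (R : ℝ) (hR : R ∈ Set.Icc (0:ℝ) 2)
    (x0 x1 : S) (hne : x1 ≠ x0)
    (hmax : ℓ x1 = ⨆ i, ℓ i) (hmin : ℓ x0 = ⨅ i, ℓ i)
    (h0 : R / 2 ≤ μ x0) :
    sSup {y : ℝ | ∃ ν : S → ℝ, (∀ i, 0 ≤ ν i) ∧ (∑ i, ν i = 1) ∧
        (∑ i, |ν i - μ i|) ≤ R ∧ y = ∑ i, ℓ i * ν i} =
      ∑ i, ℓ i * μ i + (R / 2) * ((⨆ i, ℓ i) - ⨅ i, ℓ i) := by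
  classical
  set M := ⨆ i, ℓ i
  set m := ⨅ i, ℓ i
  have hℓ : ∀ i ∈ univ, ℓ i ∈ Set.Icc m M := fun i _ =>
    ⟨ciInf_le (Set.finite_range ℓ).bddBelow i, le_ciSup (Set.finite_range ℓ).bddAbove i⟩
  have hmM : m ≤ M := (hℓ x1 (mem_univ _)).1.trans (hℓ x1 (mem_univ _)).2
  have hR2 : 0 ≤ R / 2 := by linarith [hR.1]
  refine IsGreatest.csSup_eq ⟨⟨transferMass μ x0 x1 (R / 2), transferMass_nonneg hμ0 hR2 h0,
    by rw [sum_transferMass, hμ1], by rw [sum_abs_transferMass_sub hne, abs_of_nonneg hR2]; linarith,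
    by rw [sum_mul_transferMass, hmax, hmin]⟩, ?_⟩
  rintro _ ⟨ν, -, hν1, hTV, rfl⟩
  exact sum_mul_le_of_sum_abs_sub_le univ hℓ hmM (hν1.trans hμ1.symm) hTV

theorem stmt_6 {S : Type*} [Fintype S] [Nonempty S]
    (μ : S → ℝ) (hμ0 : ∀ i, 0 ≤ μ i) (hμ1 : ∑ i, μ i = 1)
    (ℓ : S → ℝ) (hℓ : ∀ i, 0 ≤ ℓ i)
    (R : ℝ) (hR : R ∈ Set.Icc (0:ℝ) 2)
    (x0 x1 : S) (hne : x1 ≠ x0)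
    (hmax : ℓ x1 = ⨆ i, ℓ i) (hmin : ℓ x0 = ⨅ i, ℓ i)
    (h1 : μ x1 + R / 2 ≤ 1) (h0 : R / 2 ≤ μ x0) :
    sSup {y : ℝ | ∃ ν : S → ℝ, (∀ i, 0 ≤ ν i) ∧ (∑ i, ν i = 1) ∧
        (∑ i, |ν i - μ i|) ≤ R ∧ y = ∑ i, ℓ i * ν i} =
      ∑ i, ℓ i * μ i + (R / 2) * ((⨆ i, ℓ i) - ⨅ i, ℓ i) :=
  stmt_6_general μ hμ0 hμ1 ℓ R hR x0 x1 hne hmax hmin h0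
end

section
/- Let Σ be a finite set, μ, ν probability vectors, ℓ : Σ → ℝ≥0, ξ⁻_i = max(μ_i − ν_i, 0), and let Σ₀ = {i : ℓ_i = min_j ℓ_j}. Let ℓ(Σ₁) = min{ℓ_i : i ∉ Σ₀} (assuming Σ ≠ Σ₀). If ∑_i ξ_i⁻ = α/2 and ∑_{i∈Σ₀} ξ_i⁻ ≤ ∑_{i∈Σ₀} μ_i ≤ α/2, then ∑_i ℓ_i ξ_i⁻ ≥ ℓ(Σ₁)·(α/2 − ∑_{i∈Σ₀} μ_i) + (min_j ℓ_j)·∑_{i∈Σ₀} μ_i. -/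
open Finset

lemma mul_sum_le_sum_mul_of_le {ι : Type*} (s : Finset ι) {c : ℝ} {ℓ ξ : ι → ℝ}
    (hc : ∀ i ∈ s, c ≤ ℓ i) (hξ : ∀ i ∈ s, 0 ≤ ξ i) :
    c * ∑ i ∈ s, ξ i ≤ ∑ i ∈ s, ℓ i * ξ i := by
  rw [mul_sum]
  exact sum_le_sum fun i hi => mul_le_mul_of_nonneg_right (hc i hi) (hξ i hi)

/-- With mass `∑ ξ` spread over a low level `m` (on `p`) and a high level `M`, the
weighted sum is smallest when as much mass as allowed, namely `a`, sits on the low level. -/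
lemma le_sum_mul_of_two_level_bound {ι : Type*} (s : Finset ι) (p : ι → Prop) [DecidablePred p]
    {m M a : ℝ} {ℓ ξ : ι → ℝ} (hξ : ∀ i ∈ s, 0 ≤ ξ i)
    (hm : ∀ i ∈ s, p i → m ≤ ℓ i) (hM : ∀ i ∈ s, ¬ p i → M ≤ ℓ i) (hmM : m ≤ M)
    (ha : ∑ i ∈ s with p i, ξ i ≤ a) :
    M * (∑ i ∈ s, ξ i - a) + m * a ≤ ∑ i ∈ s, ℓ i * ξ i := by
  have hlow := mul_sum_le_sum_mul_of_le (s.filter p) (ℓ := ℓ) (ξ := ξ)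
    (fun i hi => hm i (mem_filter.1 hi).1 (mem_filter.1 hi).2)
    (fun i hi => hξ i (mem_filter.1 hi).1)
  have hhigh := mul_sum_le_sum_mul_of_le (s.filter (¬ p ·)) (ℓ := ℓ) (ξ := ξ)
    (fun i hi => hM i (mem_filter.1 hi).1 (mem_filter.1 hi).2)
    (fun i hi => hξ i (mem_filter.1 hi).1)
  have hshift := mul_le_mul_of_nonneg_left ha (sub_nonneg.2 hmM)
  rw [← sum_filter_add_sum_filter_not s p, ← sum_filter_add_sum_filter_not s p]
  linarith

theorem stmt_13_general {S : Type*} [Fintype S]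
    (μ ν : S → ℝ)
    (ℓ : S → ℝ)
    (hS1 : (Finset.univ.filter (fun i => ℓ i ≠ ⨅ j, ℓ j)).Nonempty)
    (α : ℝ)
    (hsum : ∑ i, max (μ i - ν i) 0 = α / 2)
    (hle : ∑ i ∈ Finset.univ.filter (fun i => ℓ i = ⨅ j, ℓ j), max (μ i - ν i) 0
        ≤ ∑ i ∈ Finset.univ.filter (fun i => ℓ i = ⨅ j, ℓ j), μ i) :
    (Finset.univ.filter (fun i => ℓ i ≠ ⨅ j, ℓ j)).inf' hS1 ℓ *
        (α / 2 - ∑ i ∈ Finset.univ.filter (fun i => ℓ i = ⨅ j, ℓ j), μ i) +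
      (⨅ j, ℓ j) * ∑ i ∈ Finset.univ.filter (fun i => ℓ i = ⨅ j, ℓ j), μ i ≤
    ∑ i, ℓ i * max (μ i - ν i) 0 := by
  have hmin : ∀ i, ⨅ j, ℓ j ≤ ℓ i := ciInf_le (Set.finite_range ℓ).bddBelow
  rw [← hsum]
  exact le_sum_mul_of_two_level_bound univ _ (fun _ _ => le_max_right _ _)
    (fun i _ _ => hmin i) (fun i _ hne => inf'_le _ (mem_filter.2 ⟨mem_univ i, hne⟩))
    (le_inf' _ _ fun i _ => hmin i) hle

theorem stmt_13 {S : Type*} [Fintype S] [Nonempty S]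
    (μ ν : S → ℝ) (hμ0 : ∀ i, 0 ≤ μ i) (hμ1 : ∑ i, μ i = 1)
    (hν0 : ∀ i, 0 ≤ ν i) (hν1 : ∑ i, ν i = 1)
    (ℓ : S → ℝ) (hℓ : ∀ i, 0 ≤ ℓ i)
    (hS1 : (Finset.univ.filter (fun i => ℓ i ≠ ⨅ j, ℓ j)).Nonempty)
    (α : ℝ)
    (hsum : ∑ i, max (μ i - ν i) 0 = α / 2)
    (hle : ∑ i ∈ Finset.univ.filter (fun i => ℓ i = ⨅ j, ℓ j), max (μ i - ν i) 0
        ≤ ∑ i ∈ Finset.univ.filter (fun i => ℓ i = ⨅ j, ℓ j), μ i)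
    (hle2 : ∑ i ∈ Finset.univ.filter (fun i => ℓ i = ⨅ j, ℓ j), μ i ≤ α / 2) :
    (Finset.univ.filter (fun i => ℓ i ≠ ⨅ j, ℓ j)).inf' hS1 ℓ *
        (α / 2 - ∑ i ∈ Finset.univ.filter (fun i => ℓ i = ⨅ j, ℓ j), μ i) +
      (⨅ j, ℓ j) * ∑ i ∈ Finset.univ.filter (fun i => ℓ i = ⨅ j, ℓ j), μ i ≤
    ∑ i, ℓ i * max (μ i - ν i) 0 :=
  stmt_13_general μ ν ℓ hS1 α hsum hle
end

section
/- Let Σ be a finite set, μ a probability vector, ℓ : Σ → ℝ≥0 non-constant, and D a real number with min_i ℓ_i ≤ D ≤ ∑_i ℓ_i μ_i. Suppose there exist distinct points x⁰ achieving max_i ℓ_i and x₀ achieving min_i ℓ_i. Set R = 2(∑_i ℓ_i μ_i − D)/(max_i ℓ_i − min_i ℓ_i), and suppose μ(x⁰) ≥ R/2 and μ(x₀) + R/2 ≤ 1. Define ν* by ν*(x₀) = μ(x₀) + R/2, ν*(x⁰) = μ(x⁰) − R/2, ν* = μ elsewhere. Then ν* is a probability vector satisfying ∑_i ℓ_i ν*_i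 = D and ∑_i |ν*_i − μ_i| = R. -/
/-
Moving mass `R / 2` from the maximiser `x1` of `ℓ` to its minimiser `x0` keeps the total mass,
changes the mean of `ℓ` by `-(R / 2) (max ℓ - min ℓ) = D - ∑ ℓ μ`, and changes the vector in
exactly two coordinates, each by `R / 2`.
-/

open Finset

namespace MassTransfer

variable {S : Type*} [DecidableEq S]

def moveMass (μ : S → ℝ) (src dst : S) (t : ℝ) : S → ℝ :=
  μ + (Pi.single dst t : S → ℝ) - Pi.single src t

variable (μ : S → ℝ) (src dst : S) (t : ℝ)

lemma moveMass_apply (i : S) :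
    moveMass μ src dst t i =
      μ i + (Pi.single dst t : S → ℝ) i - (Pi.single src t : S → ℝ) i := rfl

lemma moveMass_eq_ite (hne : src ≠ dst) :
    moveMass μ src dst t = fun i => if i = dst then μ dst + t
      else if i = src then μ src - t else μ i := by
  ext i
  by_cases hd : i = dst
  · subst hd; simp [moveMass_apply, hne.symm]
  · by_cases hs : i = src
    · subst hs; simp [moveMass_apply, hd]
    · simp [moveMass_apply, hd, hs]

lemma moveMass_nonneg (hμ : ∀ i, 0 ≤ μ i) (ht : 0 ≤ t) (hts : t ≤ μ src) (i : S) :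
    0 ≤ moveMass μ src dst t i := by
  have hdst : 0 ≤ (Pi.single dst t : S → ℝ) i :=
    (Pi.single_nonneg.mpr ht : (0 : S → ℝ) ≤ Pi.single dst t) i
  have hsrc : (Pi.single src t : S → ℝ) i ≤ μ i := by
    rw [Pi.single_apply]
    split_ifs with h
    · exact h ▸ hts
    · exact hμ i
  rw [moveMass_apply]
  linarith

variable [Fintype S]

lemma sum_moveMass : ∑ i, moveMass μ src dst t i = ∑ i, μ i := by
  simp [moveMass_apply, sum_add_distrib, sum_sub_distrib]

lemma sum_mul_moveMass (ℓ : S → ℝ) :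
    ∑ i, ℓ i * moveMass μ src dst t i = ∑ i, ℓ i * μ i - t * (ℓ src - ℓ dst) := by
  simp only [moveMass_apply, mul_sub, mul_add, sum_add_distrib, sum_sub_distrib,
    Pi.single_apply, mul_ite, mul_zero, sum_ite_eq', mem_univ, if_true]
  ring

lemma sum_abs_moveMass_sub (hne : src ≠ dst) :
    ∑ i, |moveMass μ src dst t i - μ i| = 2 * |t| := by
  have hdiff : ∀ i, |moveMass μ src dst t i - μ i|
      = (Pi.single dst |t| : S → ℝ) i + (Pi.single src |t| : S → ℝ) i := by
    intro i
    by_cases hd : i = dst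
    · subst hd; simp [moveMass_apply, hne.symm]
    · by_cases hs : i = src
      · subst hs; simp [moveMass_apply, hd]
      · simp [moveMass_apply, hd, hs]
  simp only [hdiff, sum_add_distrib, Fintype.sum_pi_single']
  ring

end MassTransfer

open MassTransfer

theorem stmt_15_general {S : Type*} [Fintype S] [DecidableEq S]
    (μ : S → ℝ) (hμ0 : ∀ i, 0 ≤ μ i) (hμ1 : ∑ i, μ i = 1)
    (ℓ : S → ℝ)
    (hnc : (⨅ i, ℓ i) < ⨆ i, ℓ i)
    (D : ℝ) (hD2 : D ≤ ∑ i, ℓ i * μ i)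
    (x0 x1 : S) (hne : x1 ≠ x0)
    (hmax : ℓ x1 = ⨆ i, ℓ i) (hmin : ℓ x0 = ⨅ i, ℓ i)
    (R : ℝ) (hR : R = 2 * (∑ i, ℓ i * μ i - D) / ((⨆ i, ℓ i) - ⨅ i, ℓ i))
    (h1 : R / 2 ≤ μ x1)
    (ν : S → ℝ)
    (hν : ν = fun i => if i = x0 then μ x0 + R / 2
            else if i = x1 then μ x1 - R / 2 else μ i) :
    (∀ i, 0 ≤ ν i) ∧ (∑ i, ν i = 1) ∧
    (∑ i, ℓ i * ν i = D) ∧ (∑ i, |ν i - μ i| = R) := by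
  rw [← moveMass_eq_ite μ x1 x0 (R / 2) hne] at hν
  subst hν
  have hgap : 0 < (⨆ i, ℓ i) - ⨅ i, ℓ i := sub_pos.mpr hnc
  have hR0 : 0 ≤ R := by
    rw [hR]; exact div_nonneg (by linarith) hgap.le
  have hshift : R / 2 * (ℓ x1 - ℓ x0) = ∑ i, ℓ i * μ i - D := by
    rw [hR, hmax, hmin]; field_simp
  refine ⟨moveMass_nonneg μ x1 x0 _ hμ0 (by linarith) h1, ?_, ?_, ?_⟩
  · rw [sum_moveMass, hμ1]
  · rw [sum_mul_moveMass, hshift]; ring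
  · rw [sum_abs_moveMass_sub μ x1 x0 _ hne, abs_of_nonneg (by linarith)]; ring

theorem stmt_15 {S : Type*} [Fintype S] [Nonempty S] [DecidableEq S]
    (μ : S → ℝ) (hμ0 : ∀ i, 0 ≤ μ i) (hμ1 : ∑ i, μ i = 1)
    (ℓ : S → ℝ) (hℓ : ∀ i, 0 ≤ ℓ i)
    (hnc : (⨅ i, ℓ i) < ⨆ i, ℓ i)
    (D : ℝ) (hD1 : (⨅ i, ℓ i) ≤ D) (hD2 : D ≤ ∑ i, ℓ i * μ i)
    (x0 x1 : S) (hne : x1 ≠ x0)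
    (hmax : ℓ x1 = ⨆ i, ℓ i) (hmin : ℓ x0 = ⨅ i, ℓ i)
    (R : ℝ) (hR : R = 2 * (∑ i, ℓ i * μ i - D) / ((⨆ i, ℓ i) - ⨅ i, ℓ i))
    (h1 : R / 2 ≤ μ x1) (h0 : μ x0 + R / 2 ≤ 1)
    (ν : S → ℝ)
    (hν : ν = fun i => if i = x0 then μ x0 + R / 2
            else if i = x1 then μ x1 - R / 2 else μ i) :
    (∀ i, 0 ≤ ν i) ∧ (∑ i, ν i = 1) ∧
    (∑ i, ℓ i * ν i = D) ∧ (∑ i, |ν i - μ i| = R) :=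
  stmt_15_general μ hμ0 hμ1 ℓ hnc D hD2 x0 x1 hne hmax hmin R hR h1 ν hν
end

section
/- Let Σ be a finite set, μ a probability vector, ℓ : Σ → ℝ≥0 non-constant. For any probability vector ν with ∑_i ℓ_i ν_i ≤ D where D ≤ ∑_i ℓ_i μ_i, we have ∑_i |ν_i − μ_i| ≥ 2(∑_i ℓ_i μ_i − D)/(max_i ℓ_i − min_i ℓ_i). -/
open Finset

/-- Writing `d = d⁺ - d⁻`, a zero sum forces `∑ d⁺ = ∑ d⁻ = (∑ |d|) / 2`; then `ℓ ≥ m` on the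
positive part and `ℓ ≤ M` on the negative part. -/
theorem sub_mul_sum_abs_div_two_le_sum_mul {ι K : Type*} [Field K] [LinearOrder K]
    [IsStrictOrderedRing K] {s : Finset ι} {ℓ d : ι → K} {m M : K}
    (hd : ∑ i ∈ s, d i = 0) (hm : ∀ i ∈ s, m ≤ ℓ i) (hM : ∀ i ∈ s, ℓ i ≤ M) :
    (m - M) * (∑ i ∈ s, |d i|) / 2 ≤ ∑ i ∈ s, ℓ i * d i := by
  have hsub : ∑ i ∈ s, (d i)⁺ - ∑ i ∈ s, (d i)⁻ = 0 := by
    simp only [← sum_sub_distrib, posPart_sub_negPart, hd]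
  have hadd : ∑ i ∈ s, (d i)⁺ + ∑ i ∈ s, (d i)⁻ = ∑ i ∈ s, |d i| := by
    simp only [← sum_add_distrib, posPart_add_negPart]
  calc (m - M) * (∑ i ∈ s, |d i|) / 2
      = ∑ i ∈ s, (m * (d i)⁺ - M * (d i)⁻) := by
        rw [sum_sub_distrib, ← mul_sum, ← mul_sum]
        linear_combination -(m + M) / 2 * hsub - (m - M) / 2 * hadd
    _ ≤ ∑ i ∈ s, (ℓ i * (d i)⁺ - ℓ i * (d i)⁻) :=
        sum_le_sum fun i hi ↦ sub_le_sub (mul_le_mul_of_nonneg_right (hm i hi) (posPart_nonneg _))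
          (mul_le_mul_of_nonneg_right (hM i hi) (negPart_nonneg _))
    _ = ∑ i ∈ s, ℓ i * d i := by simp only [← mul_sub, posPart_sub_negPart]

theorem sum_mul_sub_sum_mul_le_of_sum_eq {ι K : Type*} [Fintype ι] [Field K] [LinearOrder K]
    [IsStrictOrderedRing K] {ℓ μ ν : ι → K} {m M : K} (hμν : ∑ i, ν i = ∑ i, μ i)
    (hm : ∀ i, m ≤ ℓ i) (hM : ∀ i, ℓ i ≤ M) :
    ∑ i, ℓ i * μ i - ∑ i, ℓ i * ν i ≤ (M - m) * (∑ i, |ν i - μ i|) / 2 := by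
  have h := sub_mul_sum_abs_div_two_le_sum_mul (s := univ) (d := fun i ↦ ν i - μ i)
    (by rw [sum_sub_distrib, hμν, sub_self]) (fun i _ ↦ hm i) (fun i _ ↦ hM i)
  simp only [mul_sub, sum_sub_distrib] at h
  linarith

theorem stmt_16_general {S : Type*} [Fintype S]
    (μ : S → ℝ) (hμ1 : ∑ i, μ i = 1)
    (ℓ : S → ℝ)
    (hnc : (⨅ i, ℓ i) < ⨆ i, ℓ i)
    (D : ℝ)
    (ν : S → ℝ) (hν1 : ∑ i, ν i = 1)
    (hνD : ∑ i, ℓ i * ν i ≤ D) :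
    2 * (∑ i, ℓ i * μ i - D) / ((⨆ i, ℓ i) - ⨅ i, ℓ i) ≤
      ∑ i, |ν i - μ i| := by
  have hTV := sum_mul_sub_sum_mul_le_of_sum_eq (ℓ := ℓ) (hμν := hν1.trans hμ1.symm)
    (fun i ↦ ciInf_le (Set.finite_range ℓ).bddBelow i)
    (fun i ↦ le_ciSup (Set.finite_range ℓ).bddAbove i)
  rw [div_le_iff₀ (sub_pos.mpr hnc)]
  linarith

theorem stmt_16 {S : Type*} [Fintype S] [Nonempty S]
    (μ : S → ℝ) (hμ0 : ∀ i, 0 ≤ μ i) (hμ1 : ∑ i, μ i = 1)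
    (ℓ : S → ℝ) (hℓ : ∀ i, 0 ≤ ℓ i)
    (hnc : (⨅ i, ℓ i) < ⨆ i, ℓ i)
    (D : ℝ) (hD : D ≤ ∑ i, ℓ i * μ i)
    (ν : S → ℝ) (hν0 : ∀ i, 0 ≤ ν i) (hν1 : ∑ i, ν i = 1)
    (hνD : ∑ i, ℓ i * ν i ≤ D) :
    2 * (∑ i, ℓ i * μ i - D) / ((⨆ i, ℓ i) - ⨅ i, ℓ i) ≤
      ∑ i, |ν i - μ i| :=
  stmt_16_general μ hμ1 ℓ hnc D ν hν1 hνD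
end

section
/- Let Σ be a finite set, μ a probability vector, ℓ : Σ → ℝ≥0, R ∈ [0,2], and define D⁺(R) = max{∑_i ℓ_i ν_i : ν probability vector, ∑_i |ν_i − μ_i| ≤ R}. Let R_max = 2(1 − μ(Σ⁰)) where Σ⁰ is the argmax set of ℓ. Then for R ≤ R_max, D⁺(R) = max{∑_i ℓ_i ν_i : ν probability vector, ∑_i |ν_i − μ_i| = R}, i.e., the maximum over the ball equals the maximum over the sphere. -/
/-!
Let `M = max ℓ` and `T` its argmax set. Keeping `μ` on `T` and moving all the mass outside `T`
onto one point of `T` gives a probability vector `w` at distance `2 (1 - μ(T))` from `μ` which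
attains the value `M`, the largest value any probability vector can have. For `ν` in the ball of
radius `R ≤ 2 (1 - μ(T))`, the distance to `μ` is continuous along the segment `[ν, w]`, so by
the intermediate value theorem the segment meets the sphere of radius `R`; the value is affine along
the segment and larger at `w`, so that sphere point is at least as good as `ν`.
-/

open Finset

section

variable {S : Type*}

theorem sum_le_one_of_mem_stdSimplex [Fintype S] {μ : S → ℝ} (hμ : μ ∈ stdSimplex ℝ S)
    (T : Finset S) : ∑ j ∈ T, μ j ≤ 1 :=
  hμ.2 ▸ sum_le_sum_of_subset_of_nonneg (subset_univ T) fun i _ _ => hμ.1 i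

section MoveMass

variable [DecidableEq S]

def moveMassInto (μ : S → ℝ) (T : Finset S) (a : S) : S → ℝ :=
  fun i => (if i ∈ T then μ i else 0) + if i = a then 1 - ∑ j ∈ T, μ j else 0

variable {μ : S → ℝ} {T : Finset S} {a : S}

theorem moveMassInto_eq_zero (ha : a ∈ T) {i : S} (hi : i ∉ T) : moveMassInto μ T a i = 0 := by
  have : i ≠ a := fun h => hi (h ▸ ha)
  simp [moveMassInto, hi, this]

variable [Fintype S]

theorem moveMassInto_mem_stdSimplex (hμ : μ ∈ stdSimplex ℝ S) :
    moveMassInto μ T a ∈ stdSimplex ℝ S := by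
  have hT := sum_le_one_of_mem_stdSimplex hμ T
  refine ⟨fun i => ?_, ?_⟩
  · unfold moveMassInto
    split_ifs <;> linarith [hμ.1 i]
  · simp only [moveMassInto, sum_add_distrib, sum_ite_mem, univ_inter, sum_ite_eq', mem_univ,
      if_true]
    ring

theorem abs_moveMassInto_sub (hμ : μ ∈ stdSimplex ℝ S) (ha : a ∈ T) (i : S) :
    |moveMassInto μ T a i - μ i| =
      (if i = a then 1 - ∑ j ∈ T, μ j else 0) + if i ∈ T then 0 else μ i := by
  have hT := sum_le_one_of_mem_stdSimplex hμ T
  by_cases hia : i = a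
  · subst hia
    simp [moveMassInto, ha, abs_of_nonneg (sub_nonneg.2 hT)]
  · by_cases hiT : i ∈ T
    · simp [moveMassInto, hia, hiT]
    · simp [moveMassInto, hia, hiT, abs_of_nonneg (hμ.1 i)]

theorem sum_abs_moveMassInto_sub (hμ : μ ∈ stdSimplex ℝ S) (ha : a ∈ T) :
    ∑ i, |moveMassInto μ T a i - μ i| = 2 * (1 - ∑ i ∈ T, μ i) := by
  have hcompl : ∑ i, (if i ∈ T then 0 else μ i) = 1 - ∑ i ∈ T, μ i := by
    rw [← hμ.2, ← sum_compl_add_sum T μ, sum_ite, sum_const_zero, zero_add]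
    simp [filter_not, compl_eq_univ_sdiff]
  simp only [abs_moveMassInto_sub hμ ha, sum_add_distrib, sum_ite_eq', mem_univ, if_true, hcompl]
  ring

end MoveMass

variable [Fintype S]

theorem sum_mul_le_iSup {ℓ ν : S → ℝ} (hν : ν ∈ stdSimplex ℝ S) :
    ∑ i, ℓ i * ν i ≤ ⨆ j, ℓ j :=
  calc ∑ i, ℓ i * ν i ≤ ∑ i, (⨆ j, ℓ j) * ν i :=
        sum_le_sum fun i _ => mul_le_mul_of_nonneg_right
          (le_ciSup (Set.finite_range ℓ).bddAbove i) (hν.1 i)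
    _ = ⨆ j, ℓ j := by rw [← mul_sum, hν.2, mul_one]

theorem sum_mul_eq_of_forall_ne_zero {ℓ ν : S → ℝ} {m : ℝ} (hν : ν ∈ stdSimplex ℝ S)
    (h : ∀ i, ν i ≠ 0 → ℓ i = m) : ∑ i, ℓ i * ν i = m := by
  calc ∑ i, ℓ i * ν i = ∑ i, m * ν i := by
        refine sum_congr rfl fun i _ => ?_
        by_cases hi : ν i = 0
        · simp [hi]
        · rw [h i hi]
    _ = m := by rw [← mul_sum, hν.2, mul_one]

theorem sum_mul_le_of_mem_segment {ℓ ν w ν' : S → ℝ} (hν' : ν' ∈ segment ℝ ν w)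
    (hνw : ∑ i, ℓ i * ν i ≤ ∑ i, ℓ i * w i) : ∑ i, ℓ i * ν i ≤ ∑ i, ℓ i * ν' i := by
  obtain ⟨s, t, -, ht, hst, rfl⟩ := hν'
  have : ∑ i, ℓ i * (s • ν + t • w) i = s * ∑ i, ℓ i * ν i + t * ∑ i, ℓ i * w i := by
    simp only [Pi.add_apply, Pi.smul_apply, smul_eq_mul, mul_sum, ← sum_add_distrib]
    exact sum_congr rfl fun i _ => by ring
  rw [this, show s = 1 - t by linarith]
  linarith [mul_le_mul_of_nonneg_left hνw ht]

theorem exists_mem_segment_sum_abs_sub_eq {μ ν w : S → ℝ} {R : ℝ}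
    (hν : ∑ i, |ν i - μ i| ≤ R) (hw : R ≤ ∑ i, |w i - μ i|) :
    ∃ ν' ∈ segment ℝ ν w, ∑ i, |ν' i - μ i| = R :=
  (convex_segment ν w).isPreconnected.intermediate_value (left_mem_segment ℝ ν w)
    (right_mem_segment ℝ ν w) (by fun_prop) ⟨hν, hw⟩

end

theorem stmt_19_general {S : Type*} [Fintype S] [Nonempty S]
    (μ : S → ℝ) (hμ0 : ∀ i, 0 ≤ μ i) (hμ1 : ∑ i, μ i = 1)
    (ℓ : S → ℝ)
    (R : ℝ)
    (hRmax : R ≤ 2 * (1 - ∑ i ∈ Finset.univ.filter (fun i => ℓ i = ⨆ j, ℓ j), μ i)) :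
    sSup {y : ℝ | ∃ ν : S → ℝ, (∀ i, 0 ≤ ν i) ∧ (∑ i, ν i = 1) ∧
        (∑ i, |ν i - μ i|) ≤ R ∧ y = ∑ i, ℓ i * ν i} =
    sSup {y : ℝ | ∃ ν : S → ℝ, (∀ i, 0 ≤ ν i) ∧ (∑ i, ν i = 1) ∧
        (∑ i, |ν i - μ i|) = R ∧ y = ∑ i, ℓ i * ν i} := by
  classical
  set T := Finset.univ.filter (fun i => ℓ i = ⨆ j, ℓ j) with hT
  obtain ⟨a, ha⟩ : ∃ a, ℓ a = ⨆ j, ℓ j := exists_eq_ciSup_of_finite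
  have haT : a ∈ T := by simpa [hT] using ha
  have hμ : μ ∈ stdSimplex ℝ S := ⟨hμ0, hμ1⟩
  set w := moveMassInto μ T a
  have hw : w ∈ stdSimplex ℝ S := moveMassInto_mem_stdSimplex hμ
  have hw_val : ∑ i, ℓ i * w i = ⨆ j, ℓ j := sum_mul_eq_of_forall_ne_zero hw fun i hi => by
    by_contra h
    exact hi (moveMassInto_eq_zero haT (by simpa [hT] using h))
  have hw_dist : R ≤ ∑ i, |w i - μ i| := hRmax.trans (sum_abs_moveMassInto_sub hμ haT).ge
  apply csSup_eq_csSup_of_forall_exists_le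
  · rintro _ ⟨ν, hν0, hν1, hνR, rfl⟩
    obtain ⟨ν', hν'seg, hν'R⟩ := exists_mem_segment_sum_abs_sub_eq hνR hw_dist
    have hν' := (convex_stdSimplex ℝ S).segment_subset ⟨hν0, hν1⟩ hw hν'seg
    exact ⟨_, ⟨ν', hν'.1, hν'.2, hν'R, rfl⟩,
      sum_mul_le_of_mem_segment hν'seg (hw_val ▸ sum_mul_le_iSup ⟨hν0, hν1⟩)⟩
  · rintro _ ⟨ν, hν0, hν1, hνR, rfl⟩
    exact ⟨_, ⟨ν, hν0, hν1, hνR.le, rfl⟩, le_rfl⟩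

theorem stmt_19 {S : Type*} [Fintype S] [Nonempty S]
    (μ : S → ℝ) (hμ0 : ∀ i, 0 ≤ μ i) (hμ1 : ∑ i, μ i = 1)
    (ℓ : S → ℝ) (hℓ : ∀ i, 0 ≤ ℓ i)
    (R : ℝ) (hR0 : 0 ≤ R) (hR2 : R ≤ 2)
    (hRmax : R ≤ 2 * (1 - ∑ i ∈ Finset.univ.filter (fun i => ℓ i = ⨆ j, ℓ j), μ i)) :
    sSup {y : ℝ | ∃ ν : S → ℝ, (∀ i, 0 ≤ ν i) ∧ (∑ i, ν i = 1) ∧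
        (∑ i, |ν i - μ i|) ≤ R ∧ y = ∑ i, ℓ i * ν i} =
    sSup {y : ℝ | ∃ ν : S → ℝ, (∀ i, 0 ≤ ν i) ∧ (∑ i, ν i = 1) ∧
        (∑ i, |ν i - μ i|) = R ∧ y = ∑ i, ℓ i * ν i} :=
  stmt_19_general μ hμ0 hμ1 ℓ R hRmax
end
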